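/- Let ρ:=ω₁+⋯+ω_n, let θ̂∨ be the highest coroot (the unique element of {α∨:α∈Φ⁺} such that θ̂∨−β∨ is a nonnegative integer combination of the simple coroots α₁∨,…,α_n∨ for every β∈Φ⁺), and let h:=⟨ρ,θ̂∨⟩+1 be the Coxeter number. Let w∈W satisfy ρ−w(ρ)∈hP, and define the affine map φ:V→V by φ(v):=w(v−ρ/h)+ρ/h. Then for any 𝐤∈ℕ[Φ]^W: φ maps P into P, and for all λ,μ∈P, (λ→_{tr,𝐤}μ or μ→_{tr,𝐤}λ) if and only if (φ(λ)→_{tr,𝐤}φ(μ) or φ(μ)→_{tr,𝐤}φ(λ)). That is, φ is an automorphism of the undirected graph of truncated interval-firing. -/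

import Mathlib

/-! Put `c = h⁻¹ • ρ`. Since `0 < ⟪ρ, α∨⟫ ≤ ⟪ρ, θ̂∨⟫ = h - 1` for every positive root `α`, the
point `c` lies in the open fundamental alcove. For a weight `λ` and a positive root `α`, the firing
window `⟪λ, α∨⟫ + 1 ∈ {-𝐤(α) + 1, …, 𝐤(α)}` of the move `λ → μ = λ + α` is equivalent to
`|⟪(λ + μ)/2 - c, α∨⟫| < 𝐤(α)`, because `⟪(λ + μ)/2, α∨⟫ = ⟪λ, α∨⟫ + 1` is an integer and
`0 < ⟪c, α∨⟫ < 1`. This condition is symmetric under `λ ↔ μ`, `α ↦ -α`, and only involves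
`μ - λ`, `(λ + μ)/2 - c` and `𝐤`, all of which are transported by `v ↦ w (v - c) + c` for any
`w ∈ W`. Finally `φ v = w v + (ρ - w ρ)/h` with `(ρ - w ρ)/h ∈ P`, so `φ` preserves `P`. -/

open RealInnerProductSpace Pointwise

noncomputable section

variable {V : Type*} [NormedAddCommGroup V] [InnerProductSpace ℝ V]

/-- The coroot `α∨ = 2α/⟨α,α⟩` associated to a vector `α`. -/
def coroot (α : V) : V := (2 / ⟪α, α⟫) • α

/-- The reflection `s_α(v) = v − ⟨v,α∨⟩α` across the hyperplane orthogonal to `α`. -/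
def sRefl (α : V) (v : V) : V := v - ⟪v, coroot α⟫ • α

/-- An irreducible reduced crystallographic root system in the real inner product
space `V`, together with a chosen set of positive roots and simple roots. -/
structure RootSystemData (V : Type*) [NormedAddCommGroup V] [InnerProductSpace ℝ V] where
  n : ℕ
  roots : Set V
  roots_finite : roots.Finite
  roots_nonzero : (0 : V) ∉ roots
  roots_span : Submodule.span ℝ roots = ⊤
  refl_mem : ∀ α ∈ roots, ∀ β ∈ roots, sRefl α β ∈ roots
  reduced : ∀ α ∈ roots, ∀ c : ℝ, c • α ∈ roots → c • α = α ∨ c • α = -α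
  crystallographic : ∀ α ∈ roots, ∀ β ∈ roots, ∃ m : ℤ, ⟪β, coroot α⟫ = (m : ℝ)
  pos : Set V
  pos_subset : pos ⊆ roots
  pos_union : roots = pos ∪ (-pos)
  simple : Fin n → V
  simple_mem : ∀ i, simple i ∈ pos
  simple_li : LinearIndependent ℝ simple
  simple_span : Submodule.span ℝ (Set.range simple) = ⊤
  pos_combo : ∀ α ∈ pos, ∃ c : Fin n → ℕ, α = ∑ i, (c i : ℝ) • simple i
  irred : ∀ S₁ S₂ : Set V, roots = S₁ ∪ S₂ →
    (∀ α ∈ S₁, ∀ β ∈ S₂, ⟪α, β⟫ = 0) → S₁ = ∅ ∨ S₂ = ∅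

namespace RootSystemData

variable (R : RootSystemData V)

/-- The Weyl group `W`: all finite compositions of reflections in roots. -/
def weyl : Set (V → V) :=
  {w | ∃ l : List V, (∀ α ∈ l, α ∈ R.roots) ∧ w = (l.map sRefl).foldr (· ∘ ·) id}

/-- The orbit `W(v)` of a vector under the Weyl group. -/
def orbit (v : V) : Set V := {u | ∃ w ∈ R.weyl, u = w v}

/-- The weight lattice `P`. -/
def weightLattice : Set V :=
  {v | ∀ α ∈ R.roots, ∃ m : ℤ, ⟪v, coroot α⟫ = (m : ℝ)}

/-- The permutohedron `Π(v) = ConvexHull W(v)`. -/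
def perm (v : V) : Set V := convexHull ℝ (R.orbit v)

/-- The discrete permutohedron `Π^Q(λ) = Π(λ) ∩ (Q+λ)`. -/
def permQ (lam : V) : Set V :=
  R.perm lam ∩ {v | v - lam ∈ Submodule.span ℤ R.roots}

/-- Dominance: nonnegative pairing with all simple coroots. -/
def IsDominant (v : V) : Prop := ∀ i, 0 ≤ ⟪v, coroot (R.simple i)⟫

/-- `W`-invariance of a function `𝐤 : Φ → ℕ`. -/
def IsWInvariant (k : V → ℕ) : Prop := ∀ w ∈ R.weyl, ∀ α ∈ R.roots, k (w α) = k α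

/-- Symmetric interval-firing: `λ → λ+α` for `α ∈ Φ⁺` whenever
`⟨λ,α∨⟩+1 ∈ {−𝐤(α),…,𝐤(α)}`. -/
def symFire (k : V → ℕ) (lam mu : V) : Prop :=
  lam ∈ R.weightLattice ∧ ∃ α ∈ R.pos, mu = lam + α ∧
    -(k α : ℝ) ≤ ⟪lam, coroot α⟫ + 1 ∧ ⟪lam, coroot α⟫ + 1 ≤ (k α : ℝ)

/-- Truncated interval-firing: `λ → λ+α` for `α ∈ Φ⁺` whenever
`⟨λ,α∨⟩+1 ∈ {−𝐤(α)+1,…,𝐤(α)}`. -/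
def trFire (k : V → ℕ) (lam mu : V) : Prop :=
  lam ∈ R.weightLattice ∧ ∃ α ∈ R.pos, mu = lam + α ∧
    -(k α : ℝ) + 1 ≤ ⟪lam, coroot α⟫ + 1 ∧ ⟪lam, coroot α⟫ + 1 ≤ (k α : ℝ)

/-- All roots have the same length. -/
def SimplyLaced : Prop := ∀ α ∈ R.roots, ∀ β ∈ R.roots, ‖α‖ = ‖β‖

/-- A root of maximal length. -/
def IsLongRoot (α : V) : Prop := α ∈ R.roots ∧ ∀ β ∈ R.roots, ‖β‖ ≤ ‖α‖

/-- A root which is not of maximal length. -/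
def IsShortRoot (α : V) : Prop := α ∈ R.roots ∧ ¬ R.IsLongRoot α

/-- `𝐤` is good: either `Φ` is simply laced, or `𝐤` vanishing on short roots
implies `𝐤` vanishing on all (in particular long) roots. -/
def IsGood (k : V → ℕ) : Prop :=
  R.SimplyLaced ∨ ((∀ α, R.IsShortRoot α → k α = 0) → ∀ β ∈ R.roots, k β = 0)

/-- The product of the simple reflections indexed by a word. -/
def wordProd (l : List (Fin R.n)) : V → V :=
  (l.map (fun i => sRefl (R.simple i))).foldr (· ∘ ·) id

/-- Coxeter length: the minimal length of a word in the simple reflections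
expressing `w`. -/
def coxLen (w : V → V) : ℕ :=
  sInf {m : ℕ | ∃ l : List (Fin R.n), l.length = m ∧ w = R.wordProd l}

/-- The parabolic subgroup `W_I`: all compositions of simple reflections `s_{αᵢ}`, `i ∈ I`. -/
def weylI (I : Set (Fin R.n)) : Set (V → V) :=
  {w | ∃ l : List (Fin R.n), (∀ i ∈ l, i ∈ I) ∧ w = R.wordProd l}

/-- The orbit `W_I(v)`. -/
def orbitI (I : Set (Fin R.n)) (v : V) : Set V := {u | ∃ w ∈ R.weylI I, u = w v}

/-- The discrete parabolic permutohedron `Π^Q_I(λ)`. -/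
def permQI (I : Set (Fin R.n)) (lam : V) : Set V :=
  convexHull ℝ (R.orbitI I lam) ∩ {v | v - lam ∈ Submodule.span ℤ R.roots}

/-- Given a choice `dm` of dominant representatives, `I^{0,1}_λ` is the set of
indices `i` with `⟨λ_dom, αᵢ∨⟩ ∈ {0,1}`. -/
def I01 (dm : V → V) (lam : V) : Set (Fin R.n) :=
  {i | ⟪dm lam, coroot (R.simple i)⟫ = 0 ∨ ⟪dm lam, coroot (R.simple i)⟫ = 1}

/-- The minimal length of an `α`-traverse in `Π^Q(λ)`. -/
def traverseLen (lam α : V) : ℕ :=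
  sInf {ℓ : ℕ | ∃ mu : V, (∀ i : ℕ, i ≤ ℓ → mu - (i : ℝ) • α ∈ R.permQ lam) ∧
    mu + α ∉ R.permQ lam ∧ mu - ((ℓ : ℝ) + 1) • α ∉ R.permQ lam}

/-- `m_λ(α) = min {cᵢ : αᵢ ∈ W(α)}` where `λ = Σ cᵢ ωᵢ` is dominant,
i.e. `cᵢ = ⟨λ, αᵢ∨⟩`. -/
def mVal (lam α : V) : ℕ :=
  sInf {c : ℕ | ∃ i, R.simple i ∈ R.orbit α ∧ (c : ℝ) = ⟪lam, coroot (R.simple i)⟫}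

/-- Funny weights (only exist when `Φ` is not simply laced). -/
def IsFunny (lam : V) : Prop :=
  ¬ R.SimplyLaced ∧ ∃ l s : Fin R.n, R.IsLongRoot (R.simple l) ∧ R.IsShortRoot (R.simple s) ∧
    ⟪R.simple l, coroot (R.simple s)⟫ ≠ 0 ∧
    ⟪lam, coroot (R.simple s)⟫ = 0 ∧ 1 ≤ ⟪lam, coroot (R.simple l)⟫ ∧
    ∀ i, R.IsLongRoot (R.simple i) → ⟪lam, coroot (R.simple l)⟫ ≤ ⟪lam, coroot (R.simple i)⟫

end RootSystemData

/-- The map `η_𝐤(λ) = λ + w_λ(ρ_𝐤)`, relative to a choice `fw` of fundamental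
weights and a choice `wl` of minimal-length Weyl elements `λ ↦ w_λ`. -/
def etaMap (R : RootSystemData V) (fw : Fin R.n → V) (wl : V → V → V)
    (k : V → ℕ) (lam : V) : V :=
  lam + wl lam (∑ i, (k (R.simple i) : ℝ) • fw i)

/-- Two points are in the same connected component of a relation if they are
related by its reflexive-transitive-symmetric closure. -/
def SameComponent (r : V → V → Prop) (x y : V) : Prop :=
  Relation.ReflTransGen (fun a b => r a b ∨ r b a) x y

theorem sRefl_eq_reflection (α : V) : sRefl α = ⇑(ℝ ∙ α)ᗮ.reflection := by
  funext v
  rw [Submodule.reflection_orthogonal_apply, Submodule.reflection_singleton_apply, sRefl,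
    coroot, real_inner_smul_right, real_inner_comm α v]
  simp only [RCLike.ofReal_real_eq_id, id_eq, ← real_inner_self_eq_norm_sq]
  module

theorem sRefl_sRefl (α v : V) : sRefl α (sRefl α v) = v := by
  simp [sRefl_eq_reflection]

theorem sRefl_self (α : V) : sRefl α α = -α := by
  rw [sRefl_eq_reflection, Submodule.reflection_orthogonalComplement_singleton_eq_neg]

theorem coroot_neg (α : V) : coroot (-α) = -coroot α := by
  simp [coroot]

theorem inner_self_coroot {α : V} (hα : α ≠ 0) : ⟪α, coroot α⟫ = 2 := by
  rw [coroot, real_inner_smul_right, div_mul_cancel₀ _ (inner_self_ne_zero.2 hα)]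

theorem inner_coroot_pos_iff {v α : V} (hα : α ≠ 0) : 0 < ⟪v, coroot α⟫ ↔ 0 < ⟪v, α⟫ := by
  rw [coroot, real_inner_smul_right]
  exact mul_pos_iff_of_pos_left (div_pos two_pos (real_inner_self_pos.2 hα))

theorem LinearIsometry.coroot_map (e : V →ₗᵢ[ℝ] V) (α : V) : coroot (e α) = e (coroot α) := by
  rw [coroot, coroot, e.inner_map_map, e.map_smul]

theorem LinearIsometry.inner_map_coroot_map (e : V →ₗᵢ[ℝ] V) (u α : V) :
    ⟪e u, coroot (e α)⟫ = ⟪u, coroot α⟫ := by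
  rw [e.coroot_map, e.inner_map_map]

theorem abs_intCast_sub_lt_iff {n : ℤ} {K : ℕ} {t : ℝ} (ht₀ : 0 < t) (ht₁ : t < 1) :
    |(n : ℝ) - t| < K ↔ -(K : ℝ) + 1 ≤ n ∧ (n : ℝ) ≤ K := by
  rw [abs_lt]
  constructor
  · rintro ⟨hlo, hhi⟩
    have hlo' : -(K : ℤ) < n := by exact_mod_cast (by linarith : -(K : ℝ) < n)
    have hhi' : n < K + 1 := by exact_mod_cast (by linarith : (n : ℝ) < K + 1)
    constructor
    · exact_mod_cast (by omega : -(K : ℤ) + 1 ≤ n)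
    · exact_mod_cast (by omega : n ≤ (K : ℤ))
  · rintro ⟨hlo, hhi⟩
    constructor <;> linarith

theorem inner_midpoint_add_coroot {α : V} (hα : α ≠ 0) (v : V) :
    ⟪midpoint ℝ v (v + α), coroot α⟫ = ⟪v, coroot α⟫ + 1 := by
  rw [midpoint_eq_smul_add, real_inner_smul_left, inner_add_left, inner_add_left,
    inner_self_coroot hα]
  norm_num
  ring

namespace RootSystemData

variable {R : RootSystemData V}

theorem ne_zero_of_mem_roots {α : V} (hα : α ∈ R.roots) : α ≠ 0 :=
  fun h => R.roots_nonzero (h ▸ hα)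

theorem sRefl_mem_roots_iff {α β : V} (hα : α ∈ R.roots) :
    sRefl α β ∈ R.roots ↔ β ∈ R.roots :=
  ⟨fun h => sRefl_sRefl α β ▸ R.refl_mem α hα _ h, R.refl_mem α hα β⟩

theorem sRefl_mem_weightLattice {α v : V} (hα : α ∈ R.roots) (hv : v ∈ R.weightLattice) :
    sRefl α v ∈ R.weightLattice := by
  intro β hβ
  obtain ⟨a, ha⟩ := hv α hα
  obtain ⟨b, hb⟩ := hv β hβ
  obtain ⟨m, hm⟩ := R.crystallographic β hβ α hα
  exact ⟨b - a * m, by simp [sRefl, inner_sub_left, real_inner_smul_left, ha, hb, hm]⟩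

theorem add_mem_weightLattice {u v : V} (hu : u ∈ R.weightLattice)
    (hv : v ∈ R.weightLattice) : u + v ∈ R.weightLattice := by
  intro α hα
  obtain ⟨a, ha⟩ := hu α hα
  obtain ⟨b, hb⟩ := hv α hα
  exact ⟨a + b, by rw [inner_add_left, ha, hb, Int.cast_add]⟩

theorem sRefl_mem_weyl {α : V} (hα : α ∈ R.roots) : sRefl α ∈ R.weyl :=
  ⟨[α], by simpa using hα, rfl⟩

theorem weyl_induction {P : (V → V) → Prop} (hid : P id)
    (hcomp : ∀ α ∈ R.roots, ∀ g, P g → P (sRefl α ∘ g)) {w : V → V} (hw : w ∈ R.weyl) :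
    P w := by
  obtain ⟨l, hl, rfl⟩ := hw
  induction l with
  | nil => exact hid
  | cons α l ih =>
    exact hcomp α (hl α List.mem_cons_self) _
      (ih fun β hβ => hl β (List.mem_cons_of_mem _ hβ))

theorem exists_linearIsometry_of_mem_weyl {w : V → V} (hw : w ∈ R.weyl) :
    ∃ e : V →ₗᵢ[ℝ] V, ⇑e = w :=
  R.weyl_induction (P := fun w => ∃ e : V →ₗᵢ[ℝ] V, ⇑e = w) ⟨LinearIsometry.id, rfl⟩
    (fun α _ _ ⟨e, he⟩ => ⟨(ℝ ∙ α)ᗮ.reflection.toLinearIsometry.comp e, by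
      rw [← he, sRefl_eq_reflection]; rfl⟩) hw

theorem weyl_apply_mem_roots_iff {w : V → V} (hw : w ∈ R.weyl) {β : V} :
    w β ∈ R.roots ↔ β ∈ R.roots :=
  R.weyl_induction (P := fun w => w β ∈ R.roots ↔ β ∈ R.roots) Iff.rfl
    (fun _ hα _ hg => (R.sRefl_mem_roots_iff hα).trans hg) hw

theorem weyl_apply_mem_weightLattice {w : V → V} (hw : w ∈ R.weyl) {v : V}
    (hv : v ∈ R.weightLattice) : w v ∈ R.weightLattice :=
  R.weyl_induction (P := fun w => w v ∈ R.weightLattice) hv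
    (fun _ hα _ hg => R.sRefl_mem_weightLattice hα hg) hw

theorem IsWInvariant.apply_neg {k : V → ℕ} (hk : R.IsWInvariant k)
    {β : V} (hβ : β ∈ R.roots) : k (-β) = k β := by
  rw [← sRefl_self, hk _ (R.sRefl_mem_weyl hβ) β hβ]

theorem inner_coroot_pos_of_mem_pos {ρ : V} (hρ : ∀ i, 0 < ⟪ρ, coroot (R.simple i)⟫)
    {β : V} (hβ : β ∈ R.pos) : 0 < ⟪ρ, coroot β⟫ := by
  have hβ₀ := R.ne_zero_of_mem_roots (R.pos_subset hβ)
  have hsimple : ∀ i, 0 < ⟪ρ, R.simple i⟫ := fun i =>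
    (inner_coroot_pos_iff (R.ne_zero_of_mem_roots (R.pos_subset (R.simple_mem i)))).1 (hρ i)
  obtain ⟨c, rfl⟩ := R.pos_combo β hβ
  obtain ⟨i, hi⟩ : ∃ i, c i ≠ 0 := by
    by_contra! hc
    exact hβ₀ (by simp [hc])
  rw [inner_coroot_pos_iff hβ₀, inner_sum]
  simp only [real_inner_smul_right]
  exact Finset.sum_pos' (fun j _ => mul_nonneg (Nat.cast_nonneg _) (hsimple j).le)
    ⟨i, Finset.mem_univ i, mul_pos (by positivity) (hsimple i)⟩

theorem inner_coroot_le_of_isDominant {ρ θc : V} (hρ : R.IsDominant ρ)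
    (hθhigh : ∀ β ∈ R.pos, ∃ c : Fin R.n → ℕ,
      θc - coroot β = ∑ i, (c i : ℝ) • coroot (R.simple i))
    {β : V} (hβ : β ∈ R.pos) : ⟪ρ, coroot β⟫ ≤ ⟪ρ, θc⟫ := by
  obtain ⟨c, hc⟩ := hθhigh β hβ
  have : 0 ≤ ⟪ρ, θc - coroot β⟫ := by
    rw [hc, inner_sum]
    exact Finset.sum_nonneg fun i _ => by
      rw [real_inner_smul_right]; exact mul_nonneg (Nat.cast_nonneg _) (hρ i)
  rwa [inner_sub_right, sub_nonneg] at this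

variable (R) in
def fundAlcove : Set V := {c | ∀ α ∈ R.pos, 0 < ⟪c, coroot α⟫ ∧ ⟪c, coroot α⟫ < 1}

theorem inv_smul_mem_fundAlcove {ρ θc : V} (hρ : ∀ i, ⟪ρ, coroot (R.simple i)⟫ = 1)
    (hθhigh : ∀ β ∈ R.pos, ∃ c : Fin R.n → ℕ,
      θc - coroot β = ∑ i, (c i : ℝ) • coroot (R.simple i))
    {h : ℝ} (hh : h = ⟪ρ, θc⟫ + 1) : h⁻¹ • ρ ∈ R.fundAlcove := by
  intro α hα
  have hpos := inner_coroot_pos_of_mem_pos (fun i => (hρ i).symm ▸ one_pos) hα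
  have hle := inner_coroot_le_of_isDominant (fun i => (hρ i).symm ▸ zero_le_one) hθhigh hα
  have hh₀ : 0 < h := by linarith
  rw [real_inner_smul_left]
  exact ⟨by positivity, by rw [inv_mul_lt_one₀ hh₀]; linarith⟩

variable (R) in
/-- For `c` in the fundamental alcove this is the undirected graph of truncated interval-firing on
`P`, in a form that is visibly `W`-invariant around `c`. -/
def trEdge (k : V → ℕ) (c lam mu : V) : Prop :=
  mu - lam ∈ R.roots ∧ |⟪midpoint ℝ lam mu - c, coroot (mu - lam)⟫| < k (mu - lam)

theorem trFire_iff {k : V → ℕ} {c lam mu : V} (hc : c ∈ R.fundAlcove)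
    (hlam : lam ∈ R.weightLattice) :
    R.trFire k lam mu ↔
      mu - lam ∈ R.pos ∧ |⟪midpoint ℝ lam mu - c, coroot (mu - lam)⟫| < k (mu - lam) := by
  have window_iff : ∀ α ∈ R.pos, (-(k α : ℝ) + 1 ≤ ⟪lam, coroot α⟫ + 1 ∧ ⟪lam, coroot α⟫ + 1 ≤ k α ↔
      |⟪midpoint ℝ lam (lam + α) - c, coroot α⟫| < k α) := by
    intro α hα
    obtain ⟨n, hn⟩ := hlam α (R.pos_subset hα)
    rw [inner_sub_left, inner_midpoint_add_coroot (R.ne_zero_of_mem_roots (R.pos_subset hα)),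
      hn, show (n : ℝ) + 1 = ((n + 1 : ℤ) : ℝ) by push_cast; rfl,
      abs_intCast_sub_lt_iff (hc α hα).1 (hc α hα).2]
  simp only [trFire, hlam, true_and]
  constructor
  · rintro ⟨α, hα, rfl, hcond⟩
    rw [add_sub_cancel_left]
    exact ⟨hα, (window_iff α hα).1 hcond⟩
  · rintro ⟨hα, hlt⟩
    refine ⟨mu - lam, hα, (add_sub_cancel lam mu).symm, (window_iff _ hα).2 ?_⟩
    rwa [add_sub_cancel]

theorem trFire_or_trFire_iff {k : V → ℕ} (hk : R.IsWInvariant k) {c lam mu : V}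
    (hc : c ∈ R.fundAlcove) (hlam : lam ∈ R.weightLattice) (hmu : mu ∈ R.weightLattice) :
    R.trFire k lam mu ∨ R.trFire k mu lam ↔ R.trEdge k c lam mu := by
  rw [trFire_iff hc hlam, trFire_iff hc hmu, trEdge, midpoint_comm mu lam, ← neg_sub mu lam,
    coroot_neg, inner_neg_right, abs_neg, R.pos_union, Set.mem_union, Set.mem_neg]
  constructor
  · rintro (⟨hδ, hlt⟩ | ⟨hδ, hlt⟩)
    · exact ⟨Or.inl hδ, hlt⟩
    · rw [hk.apply_neg (R.pos_union ▸ Or.inr (Set.mem_neg.2 hδ))] at hlt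
      exact ⟨Or.inr hδ, hlt⟩
  · rintro ⟨hδ | hδ, hlt⟩
    · exact Or.inl ⟨hδ, hlt⟩
    · rw [← hk.apply_neg (R.pos_union ▸ Or.inr (Set.mem_neg.2 hδ))] at hlt
      exact Or.inr ⟨hδ, hlt⟩

theorem trEdge_weyl_iff {k : V → ℕ} (hk : R.IsWInvariant k) {w : V → V} (hw : w ∈ R.weyl)
    (c lam mu : V) :
    R.trEdge k c (w (lam - c) + c) (w (mu - c) + c) ↔ R.trEdge k c lam mu := by
  obtain ⟨e, rfl⟩ := R.exists_linearIsometry_of_mem_weyl hw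
  have hdiff : e (mu - c) + c - (e (lam - c) + c) = e (mu - lam) := by
    simp only [map_sub]; abel
  have hmid : midpoint ℝ (e (lam - c) + c) (e (mu - c) + c) - c = e (midpoint ℝ lam mu - c) := by
    simp only [midpoint_eq_smul_add, invOf_eq_inv, map_sub, map_smul, map_add]; module
  rw [trEdge, trEdge, hdiff, hmid, e.inner_map_coroot_map, R.weyl_apply_mem_roots_iff hw]
  exact and_congr_right fun hδ => by rw [hk _ hw _ hδ]

end RootSystemData

/-- The affine maps `v ↦ w(v − ρ/h) + ρ/h` for `w ∈ C = {w ∈ W : ρ − w(ρ) ∈ hP}`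
are automorphisms of the undirected graph of truncated interval-firing. -/
theorem statement3 (R : RootSystemData V)
    (fw : Fin R.n → V)
    (hfw : ∀ i j, ⟪fw i, coroot (R.simple j)⟫ = if i = j then (1 : ℝ) else 0)
    (ρ : V) (hρ : ρ = ∑ i, fw i)
    (θc : V) (hθc : ∃ γ ∈ R.pos, θc = coroot γ)
    (hθhigh : ∀ β ∈ R.pos, ∃ c : Fin R.n → ℕ,
      θc - coroot β = ∑ i, (c i : ℝ) • coroot (R.simple i))
    (h : ℝ) (hh : h = ⟪ρ, θc⟫ + 1)
    (k : V → ℕ) (hk : R.IsWInvariant k)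
    (w : V → V) (hw : w ∈ R.weyl)
    (hwC : ∃ p ∈ R.weightLattice, ρ - w ρ = h • p)
    (φ : V → V) (hφ : ∀ v, φ v = w (v - h⁻¹ • ρ) + h⁻¹ • ρ) :
    (∀ lam ∈ R.weightLattice, φ lam ∈ R.weightLattice) ∧
    (∀ lam ∈ R.weightLattice, ∀ mu ∈ R.weightLattice,
      ((R.trFire k lam mu ∨ R.trFire k mu lam) ↔
        (R.trFire k (φ lam) (φ mu) ∨ R.trFire k (φ mu) (φ lam)))) := by
  have hρ₁ : ∀ i, ⟪ρ, coroot (R.simple i)⟫ = 1 := fun i => by simp [hρ, sum_inner, hfw]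
  have hc : h⁻¹ • ρ ∈ R.fundAlcove := R.inv_smul_mem_fundAlcove hρ₁ hθhigh hh
  obtain ⟨γ, hγ, rfl⟩ := hθc
  have hh₀ : h ≠ 0 := by
    have := R.inner_coroot_pos_of_mem_pos (fun i => (hρ₁ i).symm ▸ one_pos) hγ
    rw [hh]; positivity
  obtain ⟨p, hp, hρp⟩ := hwC
  obtain ⟨e, rfl⟩ := R.exists_linearIsometry_of_mem_weyl hw
  have hφp : ∀ v, φ v = e v + p := fun v => by
    rw [hφ, map_sub, map_smul, ← inv_smul_smul₀ hh₀ p, ← hρp]; module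
  have hP : ∀ lam ∈ R.weightLattice, φ lam ∈ R.weightLattice := fun lam hlam =>
    hφp lam ▸ R.add_mem_weightLattice (R.weyl_apply_mem_weightLattice hw hlam) hp
  refine ⟨hP, fun lam hlam mu hmu => ?_⟩
  rw [R.trFire_or_trFire_iff hk hc hlam hmu,
    R.trFire_or_trFire_iff hk hc (hP lam hlam) (hP mu hmu), hφ, hφ, R.trEdge_weyl_iff hk hw]
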